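/- Let H be exponential with mean λ and D independent with density (2/(α R₁²)) y^{2/α − 1} on [0, R₁^α], and set b₃ = 2/α + 1, b₂ = R₁^α/λ, b₁ = 2λ^{2/α}/(α R₁²). Then the CDF of g = H/D admits the hypergeometric representation F_g(x) = (b₁ b₂^{b₃}/b₃) · x · ₂F₂(b₃, 1; b₃+1, 2; −b₂ x) for x ≥ 0. -/

import Mathlib

open MeasureTheory

/-- The Pochhammer symbol (rising factorial) `(x)_k = x(x+1)⋯(x+k−1)`. -/
noncomputable def poch (x : ℝ) (k : ℕ) : ℝ := ∏ i ∈ Finset.range k, (x + i)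

/-- The generalized hypergeometric function `₂F₂(a₁,a₂;b₁,b₂;z)`. -/
noncomputable def F22 (a₁ a₂ b₁ b₂ z : ℝ) : ℝ :=
  ∑' k : ℕ, poch a₁ k * poch a₂ k / (poch b₁ k * poch b₂ k * (k.factorial : ℝ)) * z ^ k

/-!
Conditioning on `D`, independence gives
`P(H/D ≤ x) = ∫₀^B (1 - exp (-x y / λ)) c y^(p-1) dy` with `p = 2/α`, `B = R₁^α`,
`c = 2/(α R₁²)`. Expanding `1 - exp (-u)` in its exponential series and integrating term by term
gives `∑ₖ -(-a)^(k+1) B^(p+1+k) / ((k+1)! (p+1+k))` with `a = x/λ`, and this is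
`a B^(p+1)/(p+1) · ₂F₂(p+1, 1; p+2, 2; -aB)` because `(1)ₖ = k!`, `(2)ₖ = (k+1)!` and
`(p+1)ₖ / (p+2)ₖ = (p+1)/(p+1+k)`.
-/

open Real Set Nat

theorem poch_succ_right (x : ℝ) (k : ℕ) : poch x (k + 1) = poch x k * (x + k) :=
  Finset.prod_range_succ _ _

theorem poch_succ_left (x : ℝ) (k : ℕ) : poch x (k + 1) = x * poch (x + 1) k := by
  rw [poch, Finset.prod_range_succ', mul_comm, poch]
  simp only [Nat.cast_zero, add_zero, Nat.cast_succ, add_assoc, add_comm (1 : ℝ)]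

theorem poch_one (k : ℕ) : poch 1 k = k ! := by
  induction k with
  | zero => simp [poch]
  | succ k ih => rw [poch_succ_right, ih, factorial_succ]; push_cast; ring

theorem poch_two (k : ℕ) : poch 2 k = (k + 1)! := by
  induction k with
  | zero => simp [poch]
  | succ k ih => rw [poch_succ_right, ih, factorial_succ (k + 1)]; push_cast; ring

theorem poch_pos {x : ℝ} (hx : 0 < x) (k : ℕ) : 0 < poch x k :=
  Finset.prod_pos fun i _ => by positivity

theorem F22_self_one_add_one_two {b : ℝ} (hb : 0 < b) (z : ℝ) :
    F22 b 1 (b + 1) 2 z = ∑' k : ℕ, b / ((b + k) * (k + 1)!) * z ^ k := by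
  refine tsum_congr fun k => ?_
  have hrec : b * poch (b + 1) k = poch b k * (b + k) := by rw [← poch_succ_right, poch_succ_left]
  have := poch_pos hb k
  have := poch_pos (by positivity : 0 < b + 1) k
  rw [poch_one, poch_two]
  congr 1
  rw [div_eq_div_iff (by positivity) (by positivity)]
  linear_combination -((k + 1)! * k ! : ℝ) * hrec

theorem hasSum_one_sub_exp_neg (u : ℝ) :
    HasSum (fun k : ℕ => -(-u) ^ (k + 1) / (k + 1)!) (1 - exp (-u)) := by
  have h := (hasSum_nat_add_iff' 1).mpr (NormedSpace.expSeries_div_hasSum_exp (-u))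
  rw [← exp_eq_exp_ℝ] at h
  simpa [neg_div] using h.neg

theorem hasSum_integral_rpow_mul_one_sub_exp_neg {p B : ℝ} (hp : 0 < p) (hB : 0 ≤ B) (a : ℝ) :
    HasSum (fun k : ℕ => ∫ y in 0..B, y ^ (p - 1) * (-(-(a * y)) ^ (k + 1) / (k + 1)!))
      (∫ y in 0..B, y ^ (p - 1) * (1 - exp (-(a * y)))) := by
  refine intervalIntegral.hasSum_integral_of_dominated_convergence
    (fun k y => y ^ (p - 1) * ((|a| * B) ^ (k + 1) / (k + 1)!))
    (fun k => by fun_prop) (fun k => ?_) ?_ ?_ ?_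
  · refine ae_of_all _ fun y hy => ?_
    rw [uIoc_of_le hB] at hy
    have hay : |a * y| ≤ |a| * B := by
      rw [abs_mul, abs_of_pos hy.1]; exact mul_le_mul_of_nonneg_left hy.2 (abs_nonneg a)
    rw [norm_mul, norm_div, norm_neg, norm_pow, norm_neg, Real.norm_of_nonneg
      (rpow_nonneg hy.1.le _), Real.norm_natCast]
    gcongr
    · exact rpow_nonneg hy.1.le _
    · rwa [Real.norm_eq_abs]
  · exact ae_of_all _ fun y _ =>
      ((summable_pow_div_factorial _).comp_injective succ_injective).mul_left _
  · simp_rw [tsum_mul_left]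
    exact (intervalIntegral.intervalIntegrable_rpow' (by linarith)).mul_const _
  · exact ae_of_all _ fun y _ => (hasSum_one_sub_exp_neg (a * y)).mul_left _

theorem integral_rpow_mul_pow_succ {p B : ℝ} (hp : 0 < p) (hB : 0 ≤ B) (a : ℝ) (k : ℕ) :
    ∫ y in 0..B, y ^ (p - 1) * (-(-(a * y)) ^ (k + 1) / (k + 1)!) =
      -(-a) ^ (k + 1) / (k + 1)! * (B ^ (p + 1 + k) / (p + 1 + k)) := by
  have hk : 0 < p + k := by positivity
  have hpow : EqOn (fun y : ℝ => y ^ (p - 1) * (-(-(a * y)) ^ (k + 1) / (k + 1)!))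
      (fun y => -(-a) ^ (k + 1) / (k + 1)! * y ^ (p + k)) (uIcc 0 B) := by
    intro y hy
    rw [uIcc_of_le hB] at hy
    have : y ^ (p + k) = y ^ (p - 1) * y ^ (k + 1) := by
      rw [← rpow_natCast, ← rpow_add' hy.1 (by push_cast; linarith)]; push_cast; ring_nf
    simp only [this]
    ring
  rw [intervalIntegral.integral_congr hpow, intervalIntegral.integral_const_mul,
    integral_rpow (Or.inl (by linarith)), zero_rpow (by linarith)]
  ring_nf

theorem integral_rpow_mul_one_sub_exp_neg {p B : ℝ} (hp : 0 < p) (hB : 0 ≤ B) (a : ℝ) :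
    ∫ y in 0..B, y ^ (p - 1) * (1 - exp (-(a * y))) =
      a * B ^ (p + 1) / (p + 1) * F22 (p + 1) 1 (p + 1 + 1) 2 (-(a * B)) := by
  rw [F22_self_one_add_one_two (by positivity), ← tsum_mul_left,
    ← (hasSum_integral_rpow_mul_one_sub_exp_neg hp hB a).tsum_eq]
  refine tsum_congr fun k => ?_
  have : 0 < p + 1 + k := by positivity
  rw [integral_rpow_mul_pow_succ hp hB, rpow_add_natCast' hB this.ne']
  field_simp
  ring

theorem ProbabilityTheory.IndepFun.measure_preimage_eq_lintegral {Ω α β : Type*}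
    [MeasurableSpace Ω] [MeasurableSpace α] [MeasurableSpace β] {μ : Measure Ω}
    [IsFiniteMeasure μ] {X : Ω → α} {Y : Ω → β} (hXY : IndepFun X Y μ)
    (hX : AEMeasurable X μ) (hY : AEMeasurable Y μ) {s : Set (α × β)} (hs : MeasurableSet s) :
    μ ((fun ω => (X ω, Y ω)) ⁻¹' s) = ∫⁻ y, μ.map X ((fun x => (x, y)) ⁻¹' s) ∂(μ.map Y) := by
  rw [← Measure.map_apply_of_aemeasurable (hX.prodMk hY) hs,
    (indepFun_iff_map_prod_eq_prod_map_map hX hY).mp hXY, Measure.prod_apply_symm hs]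

open ProbabilityTheory in
theorem withDensity_exponential_eq_expMeasure (l : ℝ) :
    volume.withDensity (fun t => ENNReal.ofReal ((Ioi 0).indicator
      (fun t => 1 / l * exp (-t / l)) t)) = expMeasure l⁻¹ := by
  refine withDensity_congr_ae ?_
  filter_upwards [volume.ae_ne 0] with t ht
  change _ = exponentialPDF l⁻¹ t
  rcases ht.lt_or_gt with ht | ht
  · rw [exponentialPDF_of_neg ht, indicator_of_notMem (notMem_Ioi.2 ht.le), ENNReal.ofReal_zero]
  · rw [exponentialPDF_of_nonneg ht.le, indicator_of_mem (mem_Ioi.2 ht)]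
    ring_nf

open ProbabilityTheory in
theorem expMeasure_Iic {r : ℝ} (hr : 0 < r) {t : ℝ} (ht : 0 ≤ t) :
    expMeasure r (Iic t) = ENNReal.ofReal (1 - exp (-(r * t))) := by
  have := isProbabilityMeasure_expMeasure hr
  rw [← ofReal_cdf, cdf_expMeasure_eq hr, if_pos ht]

theorem lintegral_withDensity_indicator_Icc {f G : ℝ → ℝ} {B : ℝ} (hB : 0 ≤ B)
    (hf : Measurable f) (hf₀ : ∀ y ∈ Ioc 0 B, 0 ≤ f y) (hG₀ : ∀ y ∈ Ioc 0 B, 0 ≤ G y)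
    (hfG : IntervalIntegrable (fun y => f y * G y) volume 0 B)
    {g : ℝ → ENNReal} (hg : ∀ y ∈ Ioc 0 B, g y = ENNReal.ofReal (G y)) :
    ∫⁻ y, g y ∂volume.withDensity (fun y => ENNReal.ofReal ((Icc 0 B).indicator f y)) =
      ENNReal.ofReal (∫ y in 0..B, f y * G y) := by
  rw [lintegral_withDensity_eq_lintegral_mul_non_measurable _
    (hf.indicator measurableSet_Icc).ennreal_ofReal (ae_of_all _ fun _ => ENNReal.ofReal_lt_top),
    intervalIntegral.integral_of_le hB, ofReal_integral_eq_lintegral_ofReal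
      ((intervalIntegrable_iff_integrableOn_Ioc_of_le hB).1 hfG)
      ((ae_restrict_iff' measurableSet_Ioc).2 (ae_of_all _ fun y hy =>
        mul_nonneg (hf₀ y hy) (hG₀ y hy))),
    ← lintegral_indicator measurableSet_Ioc]
  refine lintegral_congr_ae ?_
  filter_upwards [volume.ae_ne 0] with y hy₀
  by_cases hy : y ∈ Ioc 0 B
  · rw [Pi.mul_apply, indicator_of_mem hy, indicator_of_mem (Ioc_subset_Icc_self hy), hg y hy,
      ENNReal.ofReal_mul (hf₀ y hy)]
  · have : y ∉ Icc 0 B := fun h => hy ⟨h.1.lt_of_ne' hy₀, h.2⟩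
    rw [Pi.mul_apply, indicator_of_notMem hy, indicator_of_notMem this, ENNReal.ofReal_zero,
      zero_mul]

/-- Hypergeometric representation of the CDF of `g = H/D`:
with `b₃ = 2/α + 1`, `b₂ = R₁^α/λ`, `b₁ = 2λ^(2/α)/(α R₁²)`,
`F_g(x) = (b₁ b₂^(b₃)/b₃) x ₂F₂(b₃, 1; b₃+1, 2; −b₂ x)` for `x ≥ 0`. -/
theorem ratio_cdf_hypergeometric {Ω : Type*} [MeasurableSpace Ω]
    (ℙ : Measure Ω) [IsProbabilityMeasure ℙ]
    (R₁ α lam : ℝ) (hR₁ : 0 < R₁) (hα : 0 < α) (hlam : 0 < lam)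
    (H D : Ω → ℝ) (hH : Measurable H) (hD : Measurable D)
    (hindep : ProbabilityTheory.IndepFun H D ℙ)
    (hHpdf : Measure.map H ℙ =
      (volume : Measure ℝ).withDensity (fun h =>
        ENNReal.ofReal (Set.indicator (Set.Ioi 0)
          (fun t => (1 / lam) * Real.exp (-t / lam)) h)))
    (hDpdf : Measure.map D ℙ =
      (volume : Measure ℝ).withDensity (fun y =>
        ENNReal.ofReal (Set.indicator (Set.Icc 0 (R₁ ^ α))
          (fun z => 2 / (α * R₁ ^ 2) * z ^ (2 / α - 1)) y))) :
    ∀ x : ℝ, 0 ≤ x →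
      ℙ {ω | H ω / D ω ≤ x} =
        ENNReal.ofReal
          ((2 * lam ^ (2 / α) / (α * R₁ ^ 2)) * (R₁ ^ α / lam) ^ (2 / α + 1) /
              (2 / α + 1) * x *
            F22 (2 / α + 1) 1 (2 / α + 1 + 1) 2 (-(R₁ ^ α / lam * x))) := by
  intro x hx
  have hp : 0 < 2 / α := by positivity
  have hB : 0 ≤ R₁ ^ α := rpow_nonneg hR₁.le α
  have hHcdf : ∀ y ∈ Ioc 0 (R₁ ^ α),
      ℙ.map H ((fun h => (h, y)) ⁻¹' {q : ℝ × ℝ | q.1 / q.2 ≤ x}) =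
        ENNReal.ofReal (1 - exp (-(x / lam * y))) := by
    intro y hy
    have : (fun h => (h, y)) ⁻¹' {q : ℝ × ℝ | q.1 / q.2 ≤ x} = Iic (x * y) := by
      ext h; simp [div_le_iff₀ hy.1]
    rw [this, hHpdf, withDensity_exponential_eq_expMeasure,
      expMeasure_Iic (inv_pos.2 hlam) (mul_nonneg hx hy.1.le)]
    ring_nf
  have hexp : ∀ y ∈ Ioc 0 (R₁ ^ α), 0 ≤ 1 - exp (-(x / lam * y)) := fun y hy => by
    simp only [sub_nonneg, exp_le_one_iff, neg_nonpos]; exact mul_nonneg (by positivity) hy.1.le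
  have hint : IntervalIntegrable (fun y => 2 / (α * R₁ ^ 2) * y ^ (2 / α - 1) *
      (1 - exp (-(x / lam * y)))) volume 0 (R₁ ^ α) :=
    ((intervalIntegral.intervalIntegrable_rpow' (by linarith)).const_mul _).mul_continuousOn
      (by fun_prop)
  rw [show {ω | H ω / D ω ≤ x} = (fun ω => (H ω, D ω)) ⁻¹' {q : ℝ × ℝ | q.1 / q.2 ≤ x} from rfl,
    hindep.measure_preimage_eq_lintegral hH.aemeasurable hD.aemeasurable
      (measurableSet_le (by fun_prop) (by fun_prop)),
    hDpdf, lintegral_withDensity_indicator_Icc hB (by fun_prop)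
      (fun y hy => by have := hy.1; positivity) hexp hint hHcdf]
  simp_rw [mul_assoc]
  rw [intervalIntegral.integral_const_mul, integral_rpow_mul_one_sub_exp_neg hp hB,
    div_rpow hB hlam.le, rpow_add_one hlam.ne', show x / lam * R₁ ^ α = R₁ ^ α / lam * x by ring]
  congr 1
  field_simp
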